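/- Let B ⊊ V(G) and x ∈ B. Then for every pair of adjacent vertices u, v ∈ B, |gr_B(x,u) − gr_B(x,v)| ≤ 1; that is, the gradient of the normalized Green's function along any edge of B is at most 1 in absolute value. -/
import Mathlib


open Finset

noncomputable section
open scoped Classical

variable {V : Type*}

/-- Transition matrix of the simple random walk on `G`. -/
def walkP [Fintype V] (G : SimpleGraph V) [DecidableRel G.Adj] : Matrix V V ℝ :=
  Matrix.of fun u v => if G.Adj u v then 1 / (G.degree u : ℝ) else 0

/-- Transition matrix of the walk killed upon exiting `B`. -/
def walkQ [Fintype V] (G : SimpleGraph V) [DecidableRel G.Adj] (B : Set V) :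
    Matrix V V ℝ :=
  Matrix.of fun u v => if u ∈ B ∧ v ∈ B then walkP G u v else 0

/-- Green's function of the walk killed upon exiting `B`. -/
def GreenFn [Fintype V] [DecidableEq V] (G : SimpleGraph V) [DecidableRel G.Adj]
    (B : Set V) (x y : V) : ℝ :=
  ∑' n : ℕ, (walkQ G B ^ n) x y

/-- Normalized Green's function `gr_B(x,y) = Gr_B(x,y) / deg(y)`. -/
def grFn [Fintype V] [DecidableEq V] (G : SimpleGraph V) [DecidableRel G.Adj]
    (B : Set V) (x y : V) : ℝ :=
  GreenFn G B x y / (G.degree y : ℝ)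

section Aux

variable [Fintype V] [DecidableEq V] (G : SimpleGraph V) [DecidableRel G.Adj] (B : Set V)

lemma walkQ_nonneg (a b : V) : 0 ≤ walkQ G B a b := by
  unfold walkQ walkP
  simp only [Matrix.of_apply]
  split_ifs <;> positivity

lemma walkQ_pow_nonneg (n : ℕ) : ∀ a b : V, 0 ≤ (walkQ G B ^ n) a b := by
  induction n with
  | zero =>
    intro a b
    simp only [pow_zero, Matrix.one_apply]
    split_ifs <;> norm_num
  | succ n ih =>
    intro a b
    rw [pow_succ, Matrix.mul_apply]
    exact Finset.sum_nonneg fun w _ => mul_nonneg (ih a w) (walkQ_nonneg G B w b)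

lemma greenFn_nonneg (x y : V) : 0 ≤ GreenFn G B x y :=
  tsum_nonneg fun n => walkQ_pow_nonneg G B n x y

lemma grFn_nonneg (x y : V) : 0 ≤ grFn G B x y :=
  div_nonneg (greenFn_nonneg G B x y) (Nat.cast_nonneg _)

lemma greenFn_eq_zero_of_notMem (x y : V) (hx : x ∈ B) (hy : y ∉ B) :
    GreenFn G B x y = 0 := by
  have h : ∀ n : ℕ, (walkQ G B ^ n) x y = 0 := by
    intro n
    cases n with
    | zero =>
      simp only [pow_zero]
      exact Matrix.one_apply_ne (fun h => hy (h ▸ hx))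
    | succ n =>
      rw [pow_succ, Matrix.mul_apply]
      apply Finset.sum_eq_zero
      intro w _
      have : walkQ G B w y = 0 := by
        unfold walkQ
        simp only [Matrix.of_apply, if_neg (fun h : w ∈ B ∧ y ∈ B => hy h.2)]
      rw [this, mul_zero]
  unfold GreenFn
  simp [h]

lemma summable_of_adj {x a w : V} (hs : Summable fun n => (walkQ G B ^ n) x a)
    (hw : walkQ G B w a ≠ 0) : Summable fun n => (walkQ G B ^ n) x w := by
  have hle : ∀ n : ℕ, (walkQ G B ^ n) x w * walkQ G B w a ≤ (walkQ G B ^ (n + 1)) x a := by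
    intro n
    rw [pow_succ, Matrix.mul_apply]
    exact Finset.single_le_sum
      (f := fun z => (walkQ G B ^ n) x z * walkQ G B z a)
      (fun z _ => mul_nonneg (walkQ_pow_nonneg G B n x z) (walkQ_nonneg G B z a))
      (Finset.mem_univ w)
  have hwpos : 0 < walkQ G B w a := lt_of_le_of_ne (walkQ_nonneg G B w a) (Ne.symm hw)
  have hs' : Summable fun n : ℕ => (walkQ G B ^ (n + 1)) x a * (walkQ G B w a)⁻¹ :=
    ((summable_nat_add_iff 1).mpr hs).mul_right _
  apply Summable.of_nonneg_of_le (fun n => walkQ_pow_nonneg G B n x w) _ hs'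
  intro n
  rw [← div_eq_mul_inv, le_div_iff₀ hwpos]
  exact hle n

lemma green_identity {x a : V} (hs : Summable fun n => (walkQ G B ^ n) x a) :
    GreenFn G B x a
      = (if x = a then 1 else 0) + ∑ w, GreenFn G B x w * walkQ G B w a := by
  have h0 : GreenFn G B x a = (walkQ G B ^ 0) x a + ∑' n, (walkQ G B ^ (n + 1)) x a :=
    Summable.tsum_eq_zero_add hs
  have h1 : (walkQ G B ^ 0) x a = (if x = a then 1 else 0) := by
    simp [Matrix.one_apply]
  have hsum : ∀ w : V, Summable fun n : ℕ => (walkQ G B ^ n) x w * walkQ G B w a := by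
    intro w
    by_cases hw : walkQ G B w a = 0
    · simpa [hw] using summable_zero
    · exact (summable_of_adj G B hs hw).mul_right _
  have h2 : ∑' n, (walkQ G B ^ (n + 1)) x a
      = ∑ w, GreenFn G B x w * walkQ G B w a := by
    have : ∀ n : ℕ, (walkQ G B ^ (n + 1)) x a
        = ∑ w, (walkQ G B ^ n) x w * walkQ G B w a := by
      intro n; rw [pow_succ, Matrix.mul_apply]
    rw [tsum_congr this, Summable.tsum_finsetSum (fun w _ => hsum w)]
    exact Finset.sum_congr rfl fun w _ => (tsum_mul_right)
  rw [h0, h1, h2]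

/-- One-sided gradient bound. -/
lemma grFn_grad_le (x : V) (hx : x ∈ B)
    (u v : V) (hu : u ∈ B) (hv : v ∈ B) (huv : G.Adj u v) :
    grFn G B x u - grFn G B x v ≤ 1 := by
  set f : V → ℝ := grFn G B x with hf
  by_cases hle : f u ≤ f v
  · have := grFn_nonneg G B x v
    have := grFn_nonneg G B x u
    simp only [hf] at *
    linarith
  push_neg at hle
  -- level set
  set A : Finset V := Finset.univ.filter (fun y => f v < f y) with hA
  have hvA : v ∉ A := by simp [hA]
  have huA : u ∈ A := by simp [hA, hle]
  have hfnn : ∀ y, 0 ≤ f y := fun y => grFn_nonneg G B x y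
  have hApos : ∀ a ∈ A, 0 < GreenFn G B x a := by
    intro a ha
    have hfa : 0 < f a := lt_of_le_of_lt (hfnn v) (by simpa [hA] using ha)
    by_contra hng
    push_neg at hng
    have : GreenFn G B x a = 0 := le_antisymm hng (greenFn_nonneg G B x a)
    have : f a = 0 := by simp [hf, grFn, this]
    linarith
  have hAdeg : ∀ a ∈ A, (G.degree a : ℝ) ≠ 0 := by
    intro a ha hdeg
    have hfa : 0 < f a := lt_of_le_of_lt (hfnn v) (by simpa [hA] using ha)
    have : f a = 0 := by simp [hf, grFn, hdeg]
    linarith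
  have hAB : ∀ a ∈ A, a ∈ B := by
    intro a ha
    by_contra hnB
    have := greenFn_eq_zero_of_notMem G B x a hx hnB
    have := hApos a ha
    linarith
  have hAsum : ∀ a ∈ A, Summable fun n => (walkQ G B ^ n) x a := by
    intro a ha
    by_contra hns
    have := tsum_eq_zero_of_not_summable hns
    have h0 : GreenFn G B x a = 0 := this
    have := hApos a ha
    linarith
  -- edge flow
  set e : V → V → ℝ := fun a w => if G.Adj a w then f a - f w else 0 with he
  -- divergence identity
  have hdiv : ∀ a ∈ A, ∑ w, e a w = (if x = a then 1 else 0) := by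
    intro a ha
    have haB := hAB a ha
    have hdg := hAdeg a ha
    have hsplit : ∑ w, e a w
        = (∑ w, (if G.Adj a w then f a else 0)) - ∑ w, (if G.Adj a w then f w else 0) := by
      rw [← Finset.sum_sub_distrib]
      apply Finset.sum_congr rfl
      intro w _
      simp only [he]
      split_ifs <;> ring
    have h1 : (∑ w, (if G.Adj a w then f a else 0)) = (G.degree a : ℝ) * f a := by
      rw [← Finset.sum_filter, Finset.sum_const]
      have : Finset.univ.filter (fun w => G.Adj a w) = G.neighborFinset a := by
        ext w; simp [SimpleGraph.mem_neighborFinset]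
      rw [this]
      rw [nsmul_eq_mul, SimpleGraph.card_neighborFinset_eq_degree]
    have h1' : (G.degree a : ℝ) * f a = GreenFn G B x a := by
      simp only [hf, grFn]
      field_simp
    have h2 : (∑ w, (if G.Adj a w then f w else 0))
        = ∑ w, GreenFn G B x w * walkQ G B w a := by
      apply Finset.sum_congr rfl
      intro w _
      by_cases hadj : G.Adj a w
      · rw [if_pos hadj]
        have hadj' : G.Adj w a := hadj.symm
        by_cases hwB : w ∈ B
        · have hq : walkQ G B w a = 1 / (G.degree w : ℝ) := by
            unfold walkQ walkP
            simp [hwB, haB, hadj']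
          rw [hq]
          simp only [hf, grFn]
          rw [div_eq_mul_inv, one_div]
        · have hq : walkQ G B w a = 0 := by
            unfold walkQ
            simp only [Matrix.of_apply]
            rw [if_neg (fun h : w ∈ B ∧ a ∈ B => hwB h.1)]
          have hg : GreenFn G B x w = 0 := greenFn_eq_zero_of_notMem G B x w hx hwB
          simp [hq, hf, grFn, hg]
      · rw [if_neg hadj]
        have hq : walkQ G B w a = 0 := by
          unfold walkQ walkP
          simp only [Matrix.of_apply]
          have : ¬ G.Adj w a := fun h => hadj h.symm
          split_ifs <;> simp_all
        rw [hq, mul_zero]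
    rw [hsplit, h1, h1', h2, green_identity G B (hAsum a ha)]
    ring
  -- total divergence over A is at most 1
  have htot : ∑ a ∈ A, ∑ w, e a w ≤ 1 := by
    rw [Finset.sum_congr rfl hdiv]
    rw [Finset.sum_ite_eq A x (fun _ => (1:ℝ))]
    split_ifs <;> norm_num
  -- split inner sum over A and its complement
  have hsplit2 : ∀ a : V, ∑ w, e a w = ∑ w ∈ Finset.univ \ A, e a w + ∑ w ∈ A, e a w :=
    fun a => (Finset.sum_sdiff (Finset.subset_univ A)).symm
  have hanti : ∑ a ∈ A, ∑ w ∈ A, e a w = 0 := by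
    have hneg : ∀ a w, e a w = - e w a := by
      intro a w
      simp only [he]
      by_cases h : G.Adj a w
      · rw [if_pos h, if_pos h.symm]; ring
      · rw [if_neg h, if_neg (fun h' => h h'.symm)]; ring
    have : ∑ a ∈ A, ∑ w ∈ A, e a w = - ∑ a ∈ A, ∑ w ∈ A, e a w := by
      conv_lhs => rw [Finset.sum_comm]
      rw [← Finset.sum_neg_distrib]
      apply Finset.sum_congr rfl
      intro w _
      rw [← Finset.sum_neg_distrib]
      exact Finset.sum_congr rfl fun a _ => hneg a w
    linarith
  have hcut : ∑ a ∈ A, ∑ w ∈ Finset.univ \ A, e a w ≤ 1 := by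
    have : ∑ a ∈ A, ∑ w, e a w
        = ∑ a ∈ A, ∑ w ∈ Finset.univ \ A, e a w + ∑ a ∈ A, ∑ w ∈ A, e a w := by
      rw [← Finset.sum_add_distrib]
      exact Finset.sum_congr rfl fun a _ => hsplit2 a
    rw [this, hanti, add_zero] at htot
    exact htot
  -- each cut term is nonnegative
  have hterm_nn : ∀ a ∈ A, ∀ w ∈ Finset.univ \ A, 0 ≤ e a w := by
    intro a ha w hw
    simp only [he]
    split_ifs with h
    · have hfa : f v < f a := by simpa [hA] using ha
      have hfw : f w ≤ f v := by
        rcases Finset.mem_sdiff.mp hw with ⟨-, hw'⟩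
        simp only [hA, Finset.mem_filter, Finset.mem_univ, true_and] at hw'
        linarith [not_lt.mp hw']
      linarith
    · exact le_rfl
  -- extract the single edge (u,v)
  have hsingle : e u v ≤ ∑ a ∈ A, ∑ w ∈ Finset.univ \ A, e a w := by
    have hvmem : v ∈ Finset.univ \ A := Finset.mem_sdiff.mpr ⟨Finset.mem_univ v, hvA⟩
    have h1 : e u v ≤ ∑ w ∈ Finset.univ \ A, e u w :=
      Finset.single_le_sum (fun w hw => hterm_nn u huA w hw) hvmem
    have h2 : ∑ w ∈ Finset.univ \ A, e u w ≤ ∑ a ∈ A, ∑ w ∈ Finset.univ \ A, e a w :=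
      Finset.single_le_sum
        (fun a ha => Finset.sum_nonneg fun w hw => hterm_nn a ha w hw) huA
    linarith
  have : e u v = f u - f v := by simp [he, huv]
  rw [this] at hsingle
  linarith [le_trans hsingle hcut]

end Aux

theorem stmt2 [Fintype V] [DecidableEq V] (G : SimpleGraph V) [DecidableRel G.Adj]
    (hG : G.Connected) (hV : 2 ≤ Fintype.card V)
    (B : Set V) (hB : B ≠ Set.univ) (x : V) (hx : x ∈ B)
    (u v : V) (hu : u ∈ B) (hv : v ∈ B) (huv : G.Adj u v) :
    |grFn G B x u - grFn G B x v| ≤ 1 := by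
  rw [abs_sub_le_iff]
  exact ⟨grFn_grad_le G B x hx u v hu hv huv, grFn_grad_le G B x hx v u hv hu huv.symm⟩
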